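/- arXiv:0912.1046 — 4 statements merged into one kernel-verified Lean document; each statement's English description precedes it below -/
import Mathlib

section
/- Let V ∈ ℂ[q₁,…,qₙ] be a homogeneous polynomial of degree k and let d ∈ ℂⁿ, d ≠ 0, be an isotropic Darboux point, i.e. d₁² + ⋯ + dₙ² = 0 and either V′(d) = d (proper normalized case) or V′(d) = 0 (improper case). Then the corresponding eigenvalue of the Hessian V″(d) (namely λ = k−1 in the proper case and λ = 0 in the improper case) is a multiple eigenvalue: it is a root of the characteristic polynomial of V″(d) of algebraic multiplicity at least two. -/
/-!
Euler's identity, differentiated once, gives `V''(d) d = (k - 1) V'(d)`, so `d` is an eigenvector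
of the symmetric matrix `A = V''(d)`; by symmetry it is a left eigenvector too. A right eigenvector
`v` and a left eigenvector `w` of the same eigenvalue `μ` with `w ⬝ v = 0` force
`(X - μ)² ∣ χ_A`: if `v j ≠ 0`, Cramer's rule gives `v j · χ_A = (X - μ) · det N`, where `N` is
`X - A` with its `j`-th column replaced by `v`, and at `X = μ` the nonzero `w` lies in the left
kernel of `N`, so `μ` is a root of `det N` as well. For an isotropic Darboux point take `v = w = d`.
-/

open MvPolynomial

/-- The gradient of a multivariate polynomial, evaluated at a point. -/
noncomputable def grad {n : ℕ} (V : MvPolynomial (Fin n) ℂ) (d : Fin n → ℂ) : Fin n → ℂ :=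
  fun i => eval d (pderiv i V)

/-- The Hessian matrix of a multivariate polynomial, evaluated at a point. -/
noncomputable def hess {n : ℕ} (V : MvPolynomial (Fin n) ℂ) (d : Fin n → ℂ) :
    Matrix (Fin n) (Fin n) ℂ :=
  Matrix.of fun i j => eval d (pderiv i (pderiv j V))

open Matrix

namespace Matrix

variable {n : Type*} [Fintype n] [DecidableEq n]

theorem det_updateCol_mulVec_self {α : Type*} [CommRing α] (A : Matrix n n α) (j : n)
    (u : n → α) : (A.updateCol j (A *ᵥ u)).det = u j * A.det := by
  rw [← cramer_apply, cramer_eq_adjugate_mulVec, mulVec_mulVec, adjugate_mul, smul_mulVec,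
    one_mulVec, Pi.smul_apply, smul_eq_mul, mul_comm]

theorem charmatrix_mulVec_comp_C {α : Type*} [CommRing α] {A : Matrix n n α} {μ : α}
    {v : n → α} (hAv : A *ᵥ v = μ • v) :
    charmatrix A *ᵥ (Polynomial.C ∘ v) = (Polynomial.X - Polynomial.C μ) • (Polynomial.C ∘ v) := by
  funext i
  simp [charmatrix, sub_mulVec, sub_mul, ← RingHom.map_mulVec, hAv]

variable {K : Type*} [Field K]

theorem sq_dvd_charpoly_of_dotProduct_eq_zero {A : Matrix n n K} {μ : K} {v w : n → K}
    (hv : v ≠ 0) (hw : w ≠ 0) (hAv : A *ᵥ v = μ • v) (hwA : w ᵥ* A = μ • w)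
    (hwv : w ⬝ᵥ v = 0) : (Polynomial.X - Polynomial.C μ) ^ 2 ∣ A.charpoly := by
  obtain ⟨j, hj⟩ : ∃ j, v j ≠ 0 := Function.ne_iff.mp hv
  set N := (charmatrix A).updateCol j (Polynomial.C ∘ v)
  have hfactor : Polynomial.C (v j) * A.charpoly = (Polynomial.X - Polynomial.C μ) * N.det := by
    rw [charpoly, ← Function.comp_apply (f := Polynomial.C), ← det_updateCol_mulVec_self,
      charmatrix_mulVec_comp_C hAv, det_updateCol_smul]
  have hroot : Polynomial.X - Polynomial.C μ ∣ N.det := by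
    rw [Polynomial.dvd_iff_isRoot, Polynomial.IsRoot, ← Polynomial.coe_evalRingHom,
      RingHom.map_det]
    have hN : (Polynomial.evalRingHom μ).mapMatrix N = (scalar n μ - A).updateCol j v := by
      ext a b
      rcases eq_or_ne b j with rfl | _ <;> rcases eq_or_ne a b with rfl | _ <;> simp [N, *]
    rw [hN, ← exists_vecMul_eq_zero_iff]
    refine ⟨w, hw, ?_⟩
    rw [vecMul_updateCol, vecMul_sub, hwA, hwv]
    simp
  have hunit : IsUnit (Polynomial.C (v j)) := Polynomial.isUnit_C.mpr hj.isUnit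
  rw [← hunit.dvd_mul_left, hfactor, sq]
  exact mul_dvd_mul_left _ hroot

theorem IsSymm.two_le_rootMultiplicity_charpoly {A : Matrix n n K} (hA : A.IsSymm) {μ : K}
    {v : n → K} (hv : v ≠ 0) (hAv : A *ᵥ v = μ • v) (hvv : v ⬝ᵥ v = 0) :
    2 ≤ A.charpoly.rootMultiplicity μ := by
  have hvA : v ᵥ* A = μ • v := by rw [← hA.eq, vecMul_transpose, hAv]
  exact (Polynomial.le_rootMultiplicity_iff A.charpoly_monic.ne_zero).mpr
    (sq_dvd_charpoly_of_dotProduct_eq_zero hv hv hAv hvA hvv)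

end Matrix

namespace MvPolynomial

variable {R σ : Type*} [CommSemiring R]

theorem pderiv_pderiv_comm (i j : σ) (p : MvPolynomial σ R) :
    pderiv i (pderiv j p) = pderiv j (pderiv i p) := by
  induction p using MvPolynomial.induction_on with
  | C a => simp
  | add p q hp hq => simp [hp, hq]
  | mul_X p s h =>
      classical
      have hX : ∀ a b, pderiv a (pderiv b (X s : MvPolynomial σ R)) = 0 := by
        intro a b
        rcases eq_or_ne b s with rfl | _ <;> simp [pderiv_X, *]
      simp only [pderiv_mul, map_add, h, hX, mul_zero, add_zero]
      ring

theorem IsHomogeneous.sum_X_mul_pderiv_pderiv_add_pderiv [Fintype σ] {φ : MvPolynomial σ R}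
    {n : ℕ} (h : φ.IsHomogeneous n) (i : σ) :
    ∑ j, X j * pderiv i (pderiv j φ) + pderiv i φ = n • pderiv i φ := by
  classical
  simpa [pderiv_mul, pderiv_X, Finset.sum_add_distrib, Pi.single_apply, add_comm] using
    congrArg (pderiv i) h.sum_X_mul_pderiv

end MvPolynomial

theorem hess_isSymm {n : ℕ} (V : MvPolynomial (Fin n) ℂ) (d : Fin n → ℂ) : (hess V d).IsSymm := by
  ext i j
  simp [hess, pderiv_pderiv_comm i j]

theorem hess_mulVec_self {n k : ℕ} {V : MvPolynomial (Fin n) ℂ} (hV : V.IsHomogeneous k)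
    (d : Fin n → ℂ) : hess V d *ᵥ d = ((k : ℂ) - 1) • grad V d := by
  funext i
  have heuler := congrArg (eval d) (hV.sum_X_mul_pderiv_pderiv_add_pderiv i)
  simp only [map_add, map_sum, map_mul, eval_X, nsmul_eq_mul, map_natCast, mulVec, dotProduct,
    hess, of_apply, mul_comm, Pi.smul_apply, grad, smul_eq_mul] at heuler ⊢
  linear_combination heuler

/-- At an isotropic Darboux point `d` (i.e. `d ≠ 0`, `d₁² + ⋯ + dₙ² = 0`) of a homogeneous
potential `V` of degree `k`, the eigenvalue of the Hessian `V''(d)` corresponding to the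
eigenvector `d` — namely `k-1` in the normalized proper case `V'(d) = d`, and `0` in the
improper case `V'(d) = 0` — is a root of the characteristic polynomial of `V''(d)` of
algebraic multiplicity at least two. -/
theorem stmt2 {n k : ℕ} (V : MvPolynomial (Fin n) ℂ) (hV : V.IsHomogeneous k)
    (d : Fin n → ℂ) (hd : d ≠ 0) (hiso : ∑ i, d i ^ 2 = 0) :
    (grad V d = d →
      2 ≤ Polynomial.rootMultiplicity ((k : ℂ) - 1) (Matrix.charpoly (hess V d))) ∧
    (grad V d = 0 →
      2 ≤ Polynomial.rootMultiplicity (0 : ℂ) (Matrix.charpoly (hess V d))) := by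
  have hmul := hess_mulVec_self hV d
  have hdd : d ⬝ᵥ d = 0 := by simpa [dotProduct, sq] using hiso
  refine ⟨fun hproper => ?_, fun himproper => ?_⟩
  · exact (hess_isSymm V d).two_le_rootMultiplicity_charpoly hd (by rw [hmul, hproper]) hdd
  · exact (hess_isSymm V d).two_le_rootMultiplicity_charpoly hd
      (by rw [hmul, himproper, smul_zero, zero_smul]) hdd
end

section
/- Let U ⊆ ℂᵐ be open, let v = u₁, u₂, …, u_{m−k} : U → ℂᵐ be holomorphic vector fields and F₁, …, F_k : U → ℂ holomorphic functions (1 ≤ k ≤ m) such that: (i) each Fᵢ is a first integral of v (dFᵢ(x)[v(x)] = 0 on U); (ii) the vector fields pairwise commute, i.e. Duⱼ·uₗ − Duₗ·uⱼ ≡ 0 on U for all j, ℓ (in particular each uⱼ commutes with v); (iii) uⱼ[Fᵢ] ≡ 0 on U for all 1 ≤ i ≤ k, 1 ≤ j ≤ m−k. Define on U × ℂᵐ the Hamiltonian H(x,y) := Σₛ yₛ vˢ(x) and the m functions F̃ᵢ(x,y) := Fᵢ(x) (1 ≤ i ≤ k) and F_{k+j}(x,y) := Σₛ yₛ uⱼˢ(x)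 (1 ≤ j ≤ m−k). Then all of F̃₁,…,F̃_k, F_{k+1},…,F_m are first integrals of the Hamiltonian vector field of H (each has vanishing Poisson bracket with H) and they pairwise Poisson-commute: {F̃ᵢ, F̃ⱼ} = {F̃ᵢ, F_{k+j}} = {F_{k+i}, F_{k+j}} = 0 for all admissible indices. -/
/-- The canonical Poisson bracket of two functions `A B : ℂᵐ × ℂᵐ → ℂ` (written in curried
form, `x` being positions and `y` momenta):
`{A,B}(x,y) = Σₛ ∂A/∂xˢ · ∂B/∂yₛ − ∂A/∂yₛ · ∂B/∂xˢ`. -/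
noncomputable def poissonBracket (m : ℕ) (A B : (Fin m → ℂ) → (Fin m → ℂ) → ℂ)
    (x y : Fin m → ℂ) : ℂ :=
  ∑ s : Fin m,
    (fderiv ℂ (fun x' => A x' y) x (Pi.single s 1) *
        fderiv ℂ (fun y' => B x y') y (Pi.single s 1) -
      fderiv ℂ (fun y' => A x y') y (Pi.single s 1) *
        fderiv ℂ (fun x' => B x' y) x (Pi.single s 1))

/-- The cotangent lift of a vector field `u : U → ℂᵐ`: `F_u(x,y) = Σᵢ yᵢ uⁱ(x)`. -/
noncomputable def lift (m : ℕ) (u : (Fin m → ℂ) → (Fin m → ℂ)) :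
    (Fin m → ℂ) → (Fin m → ℂ) → ℂ :=
  fun x y => ∑ i : Fin m, y i * u x i


lemma proj_fderiv {m : ℕ} (f : (Fin m → ℂ) → (Fin m → ℂ)) (x : Fin m → ℂ)
    (hf : DifferentiableAt ℂ f x) (i : Fin m) (w : Fin m → ℂ) :
    fderiv ℂ (fun x' => f x' i) x w = fderiv ℂ f x w i := by
  have h : (fun x' => f x' i) =
      (ContinuousLinearMap.proj (R := ℂ) (φ := fun _ : Fin m => ℂ) i) ∘ f := rfl
  rw [h, fderiv_comp x ((ContinuousLinearMap.proj i).differentiableAt) hf,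
    ContinuousLinearMap.fderiv]
  rfl

lemma clm_eval {m : ℕ} (L : (Fin m → ℂ) →L[ℂ] ℂ) (w : Fin m → ℂ) :
    ∑ s : Fin m, L (Pi.single s 1) * w s = L w := by
  have hw : w = ∑ s : Fin m, w s • (Pi.single s 1 : Fin m → ℂ) := by
    funext j
    simp [Pi.single_apply]
  conv_rhs => rw [hw]
  rw [map_sum]
  simp [mul_comm]

lemma fderiv_lin {m : ℕ} (c : Fin m → ℂ) (y : Fin m → ℂ) (s : Fin m) :
    fderiv ℂ (fun y' : Fin m → ℂ => ∑ i : Fin m, y' i * c i) y (Pi.single s 1) = c s := by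
  have h : (fun y' : Fin m → ℂ => ∑ i : Fin m, y' i * c i) =
      ⇑(∑ i : Fin m, c i • (ContinuousLinearMap.proj (R := ℂ) (φ := fun _ : Fin m => ℂ) i)) := by
    funext y'
    simp [mul_comm]
  rw [h, ContinuousLinearMap.fderiv]
  simp [Pi.single_apply]

lemma fderiv_lift_x {m : ℕ} (g : (Fin m → ℂ) → (Fin m → ℂ)) (y x w : Fin m → ℂ)
    (hg : DifferentiableAt ℂ g x) :
    fderiv ℂ (fun x' => ∑ i : Fin m, y i * g x' i) x w
      = ∑ i : Fin m, y i * fderiv ℂ g x w i := by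
  have hgi : ∀ i, DifferentiableAt ℂ (fun x' => g x' i) x := fun i =>
    (differentiableAt_pi.mp hg) i
  rw [fderiv_fun_sum (fun i _ => (hgi i).const_mul (y i))]
  rw [ContinuousLinearMap.sum_apply]
  refine Finset.sum_congr rfl fun i _ => ?_
  rw [fderiv_const_mul (hgi i) (y i)]
  simp [proj_fderiv g x hg i w]

/-- The cotangent lift of a B-integrable system is Liouville integrable: given pairwise
commuting holomorphic vector fields `v = u₀, u₁, …, u_{m−k−1}` and holomorphic functions
`F₀, …, F_{k−1}` on an open `U ⊆ ℂᵐ` with `uⱼ[Fᵢ] = 0` for all `i, j` (in particular each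
`Fᵢ` is a first integral of `v`), the `m` functions `F̃ᵢ(x,y) = Fᵢ(x)` and
`F_{k+j}(x,y) = Σₛ yₛ uⱼˢ(x)` all Poisson-commute with the Hamiltonian
`H(x,y) = Σₛ yₛ vˢ(x)` of the cotangent lift, and pairwise Poisson-commute, on `U × ℂᵐ`. -/
theorem stmt6 {m k : ℕ} (hk1 : 1 ≤ k) (hkm : k < m)
    (U : Set (Fin m → ℂ)) (hU : IsOpen U)
    (u : Fin (m - k) → (Fin m → ℂ) → (Fin m → ℂ))
    (F : Fin k → (Fin m → ℂ) → ℂ)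
    (hu : ∀ j, DifferentiableOn ℂ (u j) U)
    (hF : ∀ i, DifferentiableOn ℂ (F i) U)
    -- (i) each Fᵢ is a first integral of v = u 0
    (hfi : ∀ i, ∀ x ∈ U, fderiv ℂ (F i) x (u ⟨0, by omega⟩ x) = 0)
    -- (ii) the vector fields pairwise commute
    (hcomm : ∀ j l, ∀ x ∈ U, fderiv ℂ (u j) x (u l x) = fderiv ℂ (u l) x (u j x))
    -- (iii) uⱼ[Fᵢ] ≡ 0 on U
    (hsym : ∀ i j, ∀ x ∈ U, fderiv ℂ (F i) x (u j x) = 0) :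
    (∀ i : Fin k, ∀ x ∈ U, ∀ y : Fin m → ℂ,
      poissonBracket m (fun x' _ => F i x') (lift m (u ⟨0, by omega⟩)) x y = 0) ∧
    (∀ j : Fin (m - k), ∀ x ∈ U, ∀ y : Fin m → ℂ,
      poissonBracket m (lift m (u j)) (lift m (u ⟨0, by omega⟩)) x y = 0) ∧
    (∀ i i' : Fin k, ∀ x ∈ U, ∀ y : Fin m → ℂ,
      poissonBracket m (fun x' _ => F i x') (fun x' _ => F i' x') x y = 0) ∧
    (∀ i : Fin k, ∀ j : Fin (m - k), ∀ x ∈ U, ∀ y : Fin m → ℂ,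
      poissonBracket m (fun x' _ => F i x') (lift m (u j)) x y = 0) ∧
    (∀ j j' : Fin (m - k), ∀ x ∈ U, ∀ y : Fin m → ℂ,
      poissonBracket m (lift m (u j)) (lift m (u j')) x y = 0) := by
  have hdiff : ∀ j, ∀ x ∈ U, DifferentiableAt ℂ (u j) x := fun j x hx =>
    (hu j).differentiableAt (hU.mem_nhds hx)
  have key1 : ∀ (i : Fin k) (j : Fin (m - k)), ∀ x ∈ U, ∀ y : Fin m → ℂ,
      poissonBracket m (fun x' _ => F i x') (lift m (u j)) x y = 0 := by
    intro i j x hx y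
    have hterm : ∀ s : Fin m,
        (fderiv ℂ (fun x' => F i x') x (Pi.single s 1) *
            fderiv ℂ (fun y' => lift m (u j) x y') y (Pi.single s 1) -
          fderiv ℂ (fun _ : Fin m → ℂ => F i x) y (Pi.single s 1) *
            fderiv ℂ (fun x' => lift m (u j) x' y) x (Pi.single s 1))
          = fderiv ℂ (F i) x (Pi.single s 1) * u j x s := by
      intro s
      have h1 : fderiv ℂ (fun _ : Fin m → ℂ => F i x) y = 0 := fderiv_const_apply _
      have h2 : fderiv ℂ (fun y' => lift m (u j) x y') y (Pi.single s 1) = u j x s :=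
        fderiv_lin (u j x) y s
      rw [h1, h2]
      simp
    rw [poissonBracket, Finset.sum_congr rfl fun s _ => hterm s,
      clm_eval (fderiv ℂ (F i) x) (u j x)]
    exact hsym i j x hx
  have key2 : ∀ (j j' : Fin (m - k)), ∀ x ∈ U, ∀ y : Fin m → ℂ,
      poissonBracket m (lift m (u j)) (lift m (u j')) x y = 0 := by
    intro j j' x hx y
    have hterm : ∀ s : Fin m,
        (fderiv ℂ (fun x' => lift m (u j) x' y) x (Pi.single s 1) *
            fderiv ℂ (fun y' => lift m (u j') x y') y (Pi.single s 1) -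
          fderiv ℂ (fun y' => lift m (u j) x y') y (Pi.single s 1) *
            fderiv ℂ (fun x' => lift m (u j') x' y) x (Pi.single s 1))
          = ∑ i : Fin m,
              (y i * ((ContinuousLinearMap.proj (R := ℂ) (φ := fun _ : Fin m => ℂ) i).comp
                (fderiv ℂ (u j) x) (Pi.single s 1)) * u j' x s -
               y i * ((ContinuousLinearMap.proj (R := ℂ) (φ := fun _ : Fin m => ℂ) i).comp
                (fderiv ℂ (u j') x) (Pi.single s 1)) * u j x s) := by
      intro s
      have h1 : fderiv ℂ (fun x' => lift m (u j) x' y) x (Pi.single s 1)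
          = ∑ i : Fin m, y i * fderiv ℂ (u j) x (Pi.single s 1) i :=
        fderiv_lift_x (u j) y x _ (hdiff j x hx)
      have h1' : fderiv ℂ (fun x' => lift m (u j') x' y) x (Pi.single s 1)
          = ∑ i : Fin m, y i * fderiv ℂ (u j') x (Pi.single s 1) i :=
        fderiv_lift_x (u j') y x _ (hdiff j' x hx)
      have h2 : fderiv ℂ (fun y' => lift m (u j) x y') y (Pi.single s 1) = u j x s :=
        fderiv_lin (u j x) y s
      have h2' : fderiv ℂ (fun y' => lift m (u j') x y') y (Pi.single s 1) = u j' x s :=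
        fderiv_lin (u j' x) y s
      rw [h1, h1', h2, h2', Finset.sum_mul, Finset.mul_sum, ← Finset.sum_sub_distrib]
      refine Finset.sum_congr rfl fun i _ => ?_
      simp only [ContinuousLinearMap.comp_apply, ContinuousLinearMap.proj_apply]
      ring
    rw [poissonBracket, Finset.sum_congr rfl fun s _ => hterm s, Finset.sum_comm]
    refine Finset.sum_eq_zero fun i _ => ?_
    rw [Finset.sum_sub_distrib]
    have g1 : ∑ s : Fin m,
        y i * ((ContinuousLinearMap.proj (R := ℂ) (φ := fun _ : Fin m => ℂ) i).comp
          (fderiv ℂ (u j) x) (Pi.single s 1)) * u j' x s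
        = y i * ((ContinuousLinearMap.proj (R := ℂ) (φ := fun _ : Fin m => ℂ) i).comp
          (fderiv ℂ (u j) x) (u j' x)) := by
      rw [← clm_eval ((ContinuousLinearMap.proj (R := ℂ) (φ := fun _ : Fin m => ℂ) i).comp
        (fderiv ℂ (u j) x)) (u j' x), Finset.mul_sum]
      exact Finset.sum_congr rfl fun s _ => by ring
    have g2 : ∑ s : Fin m,
        y i * ((ContinuousLinearMap.proj (R := ℂ) (φ := fun _ : Fin m => ℂ) i).comp
          (fderiv ℂ (u j') x) (Pi.single s 1)) * u j x s
        = y i * ((ContinuousLinearMap.proj (R := ℂ) (φ := fun _ : Fin m => ℂ) i).comp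
          (fderiv ℂ (u j') x) (u j x)) := by
      rw [← clm_eval ((ContinuousLinearMap.proj (R := ℂ) (φ := fun _ : Fin m => ℂ) i).comp
        (fderiv ℂ (u j') x)) (u j x), Finset.mul_sum]
      exact Finset.sum_congr rfl fun s _ => by ring
    rw [g1, g2]
    simp only [ContinuousLinearMap.comp_apply, ContinuousLinearMap.proj_apply]
    rw [hcomm j j' x hx]
    ring
  refine ⟨fun i x hx y => key1 i ⟨0, by omega⟩ x hx y,
    fun j x hx y => key2 j ⟨0, by omega⟩ x hx y,
    fun i i' x hx y => ?_, key1, key2⟩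
  have h0 : ∀ (i : Fin k), fderiv ℂ (fun _ : Fin m → ℂ => F i x) y = 0 :=
    fun i => fderiv_const_apply _
  rw [poissonBracket]
  refine Finset.sum_eq_zero fun s _ => ?_
  rw [h0 i, h0 i']
  simp
end

section
/- Let V ∈ ℂ[q₁,…,qₙ] be a homogeneous polynomial of degree k > 2 that has no improper Darboux points, i.e. V′(d) = 0 implies d = 0. Then V has only finitely many Darboux points: the image in the projective space ℙ^{n−1}(ℂ) of the set {d ∈ ℂⁿ ∖ {0} : d ∧ V′(d) = 0} is a finite set; equivalently, the set S := {d ∈ ℂⁿ ∖ {0} : V′(d) = d} of normalized representatives is finite and meets every projective Darboux point. -/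
open MvPolynomial

/-!
Since `V′` has no zero other than `0`, the Nullstellensatz gives `X_j ^ N ∈ (∂₁V, …, ∂ₙV)`,
and taking the degree-`N` component of such a relation makes the cofactors `H_ji` homogeneous of
degree `N - (k - 1)`. Modulo the ideal of `V′(q) - q` this reads `X_j ^ N ≡ ∑ᵢ H_ji X_i`, a
polynomial of degree `N - k + 2 < N` because `k > 2`; so every polynomial is congruent to one of
bounded degree, and the coordinate ring of `{d | V′(d) = d}` is finite-dimensional. Its points
give distinct algebra homomorphisms from that ring to `ℂ`, of which there are finitely many.
A Darboux point with `V′(d) = λ d` has `λ ≠ 0`, and `c d` with `c ^ (k - 2) = λ⁻¹` is fixed by `V′`.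
-/

namespace MvPolynomial

variable {σ R : Type*}

theorem IsHomogeneous.eval_smul [CommSemiring R] {φ : MvPolynomial σ R} {m : ℕ}
    (hφ : φ.IsHomogeneous m) (c : R) (x : σ → R) :
    eval (c • x) φ = c ^ m * eval x φ := by
  conv_lhs => rw [φ.as_sum]
  conv_rhs => rw [φ.as_sum]
  simp only [map_sum, Finset.mul_sum, eval_monomial]
  refine Finset.sum_congr rfl fun s hs => ?_
  rw [hφ.degree_eq_sum_deg_support hs, Finsupp.prod, Finsupp.prod, ← Finset.prod_pow_eq_pow_sum,
    mul_left_comm, ← Finset.prod_mul_distrib]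
  simp only [Pi.smul_apply, smul_eq_mul, mul_pow]

attribute [local instance] gradedAlgebra in
theorem homogeneousComponent_mul_of_isHomogeneous [CommSemiring R] {p q : MvPolynomial σ R}
    {m n : ℕ} (hq : q.IsHomogeneous m) (hmn : m ≤ n) :
    homogeneousComponent n (p * q) = homogeneousComponent (n - m) p * q := by
  simpa [← decomposition.decompose'_apply] using
    DirectSum.coe_decompose_mul_of_right_mem_of_le (𝒜 := homogeneousSubmodule σ R) (a := p) hq hmn

theorem exists_isHomogeneous_sum_mul_eq_of_mem_span {ι : Type*} [CommSemiring R] [Fintype ι]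
    {g : ι → MvPolynomial σ R} {p : MvPolynomial σ R} {m n : ℕ}
    (hg : ∀ i, (g i).IsHomogeneous m) (hp : p.IsHomogeneous n) (hmn : m ≤ n)
    (hmem : p ∈ Ideal.span (Set.range g)) :
    ∃ H : ι → MvPolynomial σ R, (∀ i, (H i).IsHomogeneous (n - m)) ∧ ∑ i, H i * g i = p := by
  obtain ⟨c, hc⟩ := Ideal.mem_span_range_iff_exists_fun.mp hmem
  refine ⟨fun i => homogeneousComponent (n - m) (c i),
    fun i => homogeneousComponent_isHomogeneous _ _, ?_⟩
  rw [← homogeneousComponent_eq_self hp, ← hc, map_sum]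
  simp_rw [homogeneousComponent_mul_of_isHomogeneous (hg _) hmn]

theorem finite_zeroLocus_of_finite_quotient {K : Type*} [Field K] (I : Ideal (MvPolynomial σ K))
    [Module.Finite K (MvPolynomial σ K ⧸ I)] : (zeroLocus K I).Finite := by
  let ev : zeroLocus K I → (MvPolynomial σ K ⧸ I →ₐ[K] K) := fun x =>
    Ideal.Quotient.liftₐ I (aeval x.1) x.2
  have hev : Function.Injective ev := by
    intro x y hxy
    ext i
    have := congrArg (fun φ => φ (Ideal.Quotient.mk I (X i))) hxy
    change aeval (x : σ → K) (X i) = aeval (y : σ → K) (X i) at this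
    rwa [aeval_X, aeval_X] at this
  exact Set.finite_coe_iff.mp (Finite.of_injective ev hev)

theorem finite_quotient_of_X_pow_sub_mem [CommRing R] [Fintype σ] (I : Ideal (MvPolynomial σ R))
    (N : σ → ℕ) (r : σ → MvPolynomial σ R) (hr : ∀ j, (r j).totalDegree < N j)
    (hI : ∀ j, X j ^ N j - r j ∈ I) : Module.Finite R (MvPolynomial σ R ⧸ I) := by
  set W := restrictTotalDegree σ R (∑ j, N j)
  set M := W ⊔ I.restrictScalars R
  have hmonomial : ∀ d, ∀ s : σ →₀ ℕ, s.degree = d → ∀ a, monomial s a ∈ M := by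
    intro d
    induction d using Nat.strong_induction_on with
    | _ d ih =>
    intro s hs a
    by_cases hsN : ∀ j, s j < N j
    · refine Submodule.mem_sup_left ((mem_restrictTotalDegree _ _ _).mpr ?_)
      calc (monomial s a).totalDegree ≤ s.degree := (isHomogeneous_monomial a rfl).totalDegree_le
        _ = ∑ j, s j := s.degree_eq_sum
        _ ≤ ∑ j, N j := Finset.sum_le_sum fun j _ => (hsN j).le
    push Not at hsN
    obtain ⟨j, hj⟩ := hsN
    set t := s - Finsupp.single j (N j)
    have hst : t + Finsupp.single j (N j) = s :=
      tsub_add_cancel_of_le (Finsupp.single_le_iff.mpr hj)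
    have hsplit : monomial s a = monomial t a * X j ^ N j := by
      rw [X_pow_eq_monomial, monomial_mul, mul_one, hst]
    rw [hsplit, ← sub_add_cancel (X j ^ N j) (r j), mul_add]
    refine add_mem (Submodule.mem_sup_right (I.mul_mem_left _ (hI j))) ?_
    rw [as_sum (monomial t a * r j)]
    refine Submodule.sum_mem _ fun u hu => ih _ ?_ u rfl _
    calc u.degree ≤ (monomial t a * r j).totalDegree := le_totalDegree hu
      _ ≤ t.degree + (r j).totalDegree := (totalDegree_mul _ _).trans
        (Nat.add_le_add_right (isHomogeneous_monomial a rfl).totalDegree_le _)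
      _ < t.degree + N j := by have := hr j; omega
      _ = d := by rw [← hs, ← hst, map_add, Finsupp.degree_single]
  have hsurj : Function.Surjective ((Ideal.Quotient.mkₐ R I).toLinearMap ∘ₗ W.subtype) := by
    intro q
    obtain ⟨P, rfl⟩ := Ideal.Quotient.mk_surjective q
    have hP : P ∈ M := by
      rw [as_sum P]
      exact Submodule.sum_mem _ fun s _ => hmonomial _ s rfl _
    obtain ⟨w, hw, i, hi, rfl⟩ := Submodule.mem_sup.mp hP
    exact ⟨⟨w, hw⟩, (Ideal.Quotient.mk_eq_mk_iff_sub_mem _ _).mpr (by simpa using I.neg_mem hi)⟩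
  exact Module.Finite.of_surjective _ hsurj

end MvPolynomial

noncomputable def darbouxIdeal {n : ℕ} (V : MvPolynomial (Fin n) ℂ) :
    Ideal (MvPolynomial (Fin n) ℂ) :=
  Ideal.span (Set.range fun i => pderiv i V - X i)

theorem exists_eq_smul_of_forall_mul_eq_mul {ι K : Type*} [Field K] {d v : ι → K} (hd : d ≠ 0)
    (h : ∀ i j, d i * v j = d j * v i) : ∃ c : K, v = c • d := by
  obtain ⟨i, hi⟩ := Function.ne_iff.mp hd
  refine ⟨v i / d i, funext fun j => ?_⟩
  rw [Pi.smul_apply, smul_eq_mul, div_mul_eq_mul_div, eq_div_iff hi]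
  linear_combination h i j

section Darboux

variable {n k : ℕ} {V : MvPolynomial (Fin n) ℂ}

theorem grad_smul (hV : V.IsHomogeneous k) (c : ℂ) (d : Fin n → ℂ) :
    grad V (c • d) = c ^ (k - 1) • grad V d :=
  funext fun _ => hV.pderiv.eval_smul c d

theorem exists_grad_smul_eq_smul (hk : 2 < k) (hV : V.IsHomogeneous k)
    (hproper : ∀ d, grad V d = 0 → d = 0) {d : Fin n → ℂ} (hd : d ≠ 0)
    (hpar : ∀ i j, d i * grad V d j = d j * grad V d i) :
    ∃ c : ℂ, c ≠ 0 ∧ grad V (c • d) = c • d := by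
  obtain ⟨μ, hμ⟩ := exists_eq_smul_of_forall_mul_eq_mul hd hpar
  have hμ0 : μ ≠ 0 := by
    rintro rfl
    exact hd (hproper d (by rw [hμ, zero_smul]))
  obtain ⟨c, hc⟩ := IsAlgClosed.exists_pow_nat_eq μ⁻¹ (by omega : 0 < k - 2)
  have hc0 : c ≠ 0 := by
    rintro rfl
    exact inv_ne_zero hμ0 (by rw [← hc, zero_pow (by omega)])
  refine ⟨c, hc0, ?_⟩
  rw [grad_smul hV, hμ, smul_smul, show k - 1 = k - 2 + 1 by omega, pow_succ, hc,
    mul_right_comm, inv_mul_cancel₀ hμ0, one_mul]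

theorem mem_zeroLocus_darbouxIdeal {d : Fin n → ℂ} (hd : grad V d = d) :
    d ∈ zeroLocus ℂ (darbouxIdeal V) := by
  have : darbouxIdeal V ≤ RingHom.ker (aeval d) := by
    refine Ideal.span_le.mpr ?_
    rintro _ ⟨i, rfl⟩
    simpa [grad, sub_eq_zero] using congrFun hd i
  exact fun p hp => this hp

theorem exists_X_pow_mem_span_pderiv (hproper : ∀ d, grad V d = 0 → d = 0) (j : Fin n) :
    ∃ N, X j ^ N ∈ Ideal.span (Set.range fun i => pderiv i V) := by
  suffices X j ∈ vanishingIdeal ℂ (zeroLocus ℂ (Ideal.span (Set.range fun i => pderiv i V))) by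
    rwa [vanishingIdeal_zeroLocus_eq_radical] at this
  intro x hx
  have : x = 0 := hproper x <| funext fun i => by
    simpa [grad] using hx _ (Ideal.subset_span ⟨i, rfl⟩)
  simp [this]

theorem finite_quotient_darbouxIdeal (hk : 2 < k) (hV : V.IsHomogeneous k)
    (hproper : ∀ d, grad V d = 0 → d = 0) :
    Module.Finite ℂ (MvPolynomial (Fin n) ℂ ⧸ darbouxIdeal V) := by
  have hcofactor : ∀ j, ∃ M, ∃ H : Fin n → MvPolynomial (Fin n) ℂ,
      (∀ i, (H i).IsHomogeneous M) ∧ ∑ i, H i * pderiv i V = X j ^ (M + (k - 1)) := by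
    intro j
    obtain ⟨M, hM⟩ := exists_X_pow_mem_span_pderiv hproper j
    obtain ⟨H, hH, hsum⟩ := exists_isHomogeneous_sum_mul_eq_of_mem_span (fun i => hV.pderiv)
      (isHomogeneous_X_pow j (M + (k - 1))) (by omega)
      (by rw [pow_add]; exact Ideal.mul_mem_right _ _ hM)
    exact ⟨M, H, by simpa using hH, hsum⟩
  choose M H hH hsum using hcofactor
  refine finite_quotient_of_X_pow_sub_mem _ (fun j => M j + (k - 1))
    (fun j => ∑ i, H j i * X i) (fun j => ?_) (fun j => ?_)
  · have : (∑ i, H j i * X i).IsHomogeneous (M j + 1) :=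
      IsHomogeneous.sum _ _ _ fun i _ => (hH j i).mul (isHomogeneous_X _ i)
    exact this.totalDegree_le.trans_lt (by omega)
  · rw [← hsum j, ← Finset.sum_sub_distrib]
    refine Ideal.sum_mem _ fun i _ => ?_
    rw [← mul_sub]
    exact Ideal.mul_mem_left _ _ (Ideal.subset_span ⟨i, rfl⟩)

end Darboux

/-- If a homogeneous potential `V` of degree `k > 2` has no improper Darboux points
(`V'(d) = 0 ⟹ d = 0`), then it has only finitely many Darboux points: the image in
`ℙⁿ⁻¹(ℂ)` of `{d ≠ 0 : d ∧ V'(d) = 0}` is finite; equivalently, the set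
`S = {d ≠ 0 : V'(d) = d}` of normalized representatives is finite and meets every
projective Darboux point. -/
theorem stmt15 {n k : ℕ} (hk : 2 < k)
    (V : MvPolynomial (Fin n) ℂ) (hV : V.IsHomogeneous k)
    (hproper : ∀ d : Fin n → ℂ, grad V d = 0 → d = 0) :
    Set.Finite {p : Projectivization ℂ (Fin n → ℂ) |
      ∃ d : Fin n → ℂ, ∃ hd : d ≠ 0,
        (∀ i j, d i * grad V d j = d j * grad V d i) ∧ p = Projectivization.mk ℂ d hd} ∧
    Set.Finite {d : Fin n → ℂ | d ≠ 0 ∧ grad V d = d} ∧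
    (∀ d : Fin n → ℂ, d ≠ 0 → (∀ i j, d i * grad V d j = d j * grad V d i) →
      ∃ c : ℂ, c ≠ 0 ∧ grad V (fun i => c * d i) = fun i => c * d i) := by
  have : Module.Finite ℂ (MvPolynomial (Fin n) ℂ ⧸ darbouxIdeal V) :=
    finite_quotient_darbouxIdeal hk hV hproper
  have hS : {d : Fin n → ℂ | d ≠ 0 ∧ grad V d = d}.Finite :=
    (finite_zeroLocus_of_finite_quotient _).subset fun d hd => mem_zeroLocus_darbouxIdeal hd.2
  have hrescale := fun d (hd : d ≠ 0) hpar => exists_grad_smul_eq_smul hk hV hproper hd hpar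
  refine ⟨(hS.dependent_image fun d hd => Projectivization.mk ℂ d hd.1).subset ?_, hS, hrescale⟩
  rintro _ ⟨d, hd, hpar, rfl⟩
  obtain ⟨c, hc, hfix⟩ := hrescale d hd hpar
  have hcd : c • d ≠ 0 := smul_ne_zero hc hd
  exact ⟨c • d, ⟨hcd, hfix⟩, (Projectivization.mk_eq_mk_iff' ℂ _ _ hcd hd).mpr ⟨c, rfl⟩⟩
end

section
/- Consider the natural Hamiltonian H = (1/2)(p₁² + p₂²) + V(q₁,q₂) on ℂ⁴ with the homogeneous degree-7 potential V = (q₂ − i·q₁)²·(q₂ + i·q₁)⁵ (i the imaginary unit). Then H admits an additional polynomial first integral of degree four in the momenta: there exists a polynomial I ∈ ℂ[q₁,q₂,p₁,p₂], of degree 4 as a polynomial in (p₁,p₂), such that the canonical Poisson bracket {H, I} = Σᵢ(∂H/∂qᵢ·∂I/∂pᵢ − ∂H/∂pᵢ·∂I/∂qᵢ) vanishes identically and such that H and I are algebraically independent over ℂ. -/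
open MvPolynomial

noncomputable section StmtAux

private def ee (a b c d : ℕ) : Fin 4 →₀ ℕ :=
  Finsupp.single 0 a + Finsupp.single 1 b + Finsupp.single 2 c + Finsupp.single 3 d

private lemma ee0 (a b c d : ℕ) : ee a b c d 0 = a := by
  simp [ee, Finsupp.single_apply]

private lemma ee1 (a b c d : ℕ) : ee a b c d 1 = b := by
  simp [ee, Finsupp.single_apply]

private lemma ee2 (a b c d : ℕ) : ee a b c d 2 = c := by
  simp [ee, Finsupp.single_apply]

private lemma ee3 (a b c d : ℕ) : ee a b c d 3 = d := by
  simp [ee, Finsupp.single_apply]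

private lemma ee_eq_iff {a b c d a' b' c' d' : ℕ} :
    ee a b c d = ee a' b' c' d' ↔ (a = a' ∧ b = b' ∧ c = c' ∧ d = d') := by
  constructor
  · intro h
    refine ⟨?_, ?_, ?_, ?_⟩
    · have := DFunLike.congr_fun h 0; rwa [ee0, ee0] at this
    · have := DFunLike.congr_fun h 1; rwa [ee1, ee1] at this
    · have := DFunLike.congr_fun h 2; rwa [ee2, ee2] at this
    · have := DFunLike.congr_fun h 3; rwa [ee3, ee3] at this
  · rintro ⟨rfl, rfl, rfl, rfl⟩; rfl

set_option maxRecDepth 4000 in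
private lemma mh (a b c d : ℕ) (co : ℂ) :
    (monomial (ee a b c d) co : MvPolynomial (Fin 4) ℂ) =
      C co * X 0 ^ a * X 1 ^ b * X 2 ^ c * X 3 ^ d := by
  rw [ee, C_mul_X_pow_eq_monomial, X_pow_eq_monomial, X_pow_eq_monomial, X_pow_eq_monomial,
    monomial_mul, monomial_mul, monomial_mul, mul_one, mul_one, mul_one]

private def Jm : MvPolynomial (Fin 4) ℂ :=
  monomial (ee 0 1 1 3) ((8 : ℂ) * Complex.I) +
    monomial (ee 0 1 2 2) (-24 : ℂ) +
    monomial (ee 0 1 3 1) ((-24 : ℂ) * Complex.I) +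
    monomial (ee 0 1 4 0) (8 : ℂ) +
    monomial (ee 0 8 0 2) (-3 : ℂ) +
    monomial (ee 0 8 1 1) ((6 : ℂ) * Complex.I) +
    monomial (ee 0 8 2 0) (-13 : ℂ) +
    monomial (ee 0 15 0 0) (-4 : ℂ) +
    monomial (ee 1 0 0 4) ((-8 : ℂ) * Complex.I) +
    monomial (ee 1 0 1 3) (24 : ℂ) +
    monomial (ee 1 0 2 2) ((24 : ℂ) * Complex.I) +
    monomial (ee 1 0 3 1) (-8 : ℂ) +
    monomial (ee 1 7 0 2) ((-24 : ℂ) * Complex.I) +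
    monomial (ee 1 7 1 1) (-16 : ℂ) +
    monomial (ee 1 7 2 0) ((-72 : ℂ) * Complex.I) +
    monomial (ee 1 14 0 0) ((-36 : ℂ) * Complex.I) +
    monomial (ee 2 6 0 2) (68 : ℂ) +
    monomial (ee 2 6 1 1) ((24 : ℂ) * Complex.I) +
    monomial (ee 2 6 2 0) (156 : ℂ) +
    monomial (ee 2 13 0 0) (132 : ℂ) +
    monomial (ee 3 5 0 2) ((72 : ℂ) * Complex.I) +
    monomial (ee 3 5 1 1) (-144 : ℂ) +
    monomial (ee 3 5 2 0) ((152 : ℂ) * Complex.I) +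
    monomial (ee 3 12 0 0) ((228 : ℂ) * Complex.I) +
    monomial (ee 4 4 0 2) (30 : ℂ) +
    monomial (ee 4 4 1 1) ((-220 : ℂ) * Complex.I) +
    monomial (ee 4 4 2 0) (-30 : ℂ) +
    monomial (ee 4 11 0 0) (-84 : ℂ) +
    monomial (ee 5 3 0 2) ((152 : ℂ) * Complex.I) +
    monomial (ee 5 3 1 1) (144 : ℂ) +
    monomial (ee 5 3 2 0) ((72 : ℂ) * Complex.I) +
    monomial (ee 5 10 0 0) ((396 : ℂ) * Complex.I) +
    monomial (ee 6 2 0 2) (-156 : ℂ) +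
    monomial (ee 6 2 1 1) ((24 : ℂ) * Complex.I) +
    monomial (ee 6 2 2 0) (-68 : ℂ) +
    monomial (ee 6 9 0 0) (-748 : ℂ) +
    monomial (ee 7 1 0 2) ((-72 : ℂ) * Complex.I) +
    monomial (ee 7 1 1 1) (16 : ℂ) +
    monomial (ee 7 1 2 0) ((-24 : ℂ) * Complex.I) +
    monomial (ee 7 8 0 0) ((-396 : ℂ) * Complex.I) +
    monomial (ee 8 0 0 2) (13 : ℂ) +
    monomial (ee 8 0 1 1) ((6 : ℂ) * Complex.I) +
    monomial (ee 8 0 2 0) (3 : ℂ) +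
    monomial (ee 8 7 0 0) (-396 : ℂ) +
    monomial (ee 9 6 0 0) ((-748 : ℂ) * Complex.I) +
    monomial (ee 10 5 0 0) (396 : ℂ) +
    monomial (ee 11 4 0 0) ((-84 : ℂ) * Complex.I) +
    monomial (ee 12 3 0 0) (228 : ℂ) +
    monomial (ee 13 2 0 0) ((132 : ℂ) * Complex.I) +
    monomial (ee 14 1 0 0) (-36 : ℂ) +
    monomial (ee 15 0 0 0) ((-4 : ℂ) * Complex.I)

private lemma supP {P : (Fin 4 →₀ ℕ) → Prop} {A B : MvPolynomial (Fin 4) ℂ}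
    (hA : ∀ m ∈ A.support, P m) (hB : ∀ m ∈ B.support, P m) :
    ∀ m ∈ (A + B).support, P m := by
  intro m hm
  classical
  rcases Finset.mem_union.mp (support_add hm) with h | h
  exacts [hA m h, hB m h]

private lemma supM {P : (Fin 4 →₀ ℕ) → Prop} {d : Fin 4 →₀ ℕ} {c : ℂ} (h : P d) :
    ∀ m ∈ (monomial d c : MvPolynomial (Fin 4) ℂ).support, P m := by
  intro m hm
  have := support_monomial_subset hm
  rw [Finset.mem_singleton] at this
  rwa [this]

private lemma eeP {a b c d : ℕ} (h : c + d ≤ 4) :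
    ee a b c d 2 + ee a b c d 3 ≤ 4 := by
  rw [ee2, ee3]; exact h

private lemma sup4 : ∀ m ∈ Jm.support, m 2 + m 3 ≤ 4 := by
  simp only [Jm]
  exact (supP (supP (supP (supP (supP (supP (supP (supP (supP (supP (supP (supP (supP (supP (supP (supP (supP (supP (supP (supP (supP (supP (supP (supP (supP (supP (supP (supP (supP (supP (supP (supP (supP (supP (supP (supP (supP (supP (supP (supP (supP (supP (supP (supP (supP (supP (supP (supP (supP (supP (supM (eeP (by norm_num))) (supM (eeP (by norm_num)))) (supM (eeP (by norm_num)))) (supM (eeP (by norm_num)))) (supM (eeP (by norm_num)))) (supM (eeP (by norm_num)))) (supM (eeP (by norm_num)))) (supM (eeP (by norm_num)))) (supM (eeP (by norm_num)))) (supM (eeP (by norm_num)))) (supM (eeP (by norm_num)))) (supM (eeP (by norm_num)))) (supM (eeP (by norm_num)))) (supM (eeP (by norm_num)))) (supM (eeP (by norm_num)))) (supM (eeP (by norm_num)))) (supM (eeP (by norm_num)))) (supM (eeP (by norm_num)))) (supM (eeP (by norm_num)))) (supM (eeP (by norm_num)))) (supM (eeP (by norm_num)))) (supM (eeP (by norm_num))))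 (supM (eeP (by norm_num)))) (supM (eeP (by norm_num)))) (supM (eeP (by norm_num)))) (supM (eeP (by norm_num)))) (supM (eeP (by norm_num)))) (supM (eeP (by norm_num)))) (supM (eeP (by norm_num)))) (supM (eeP (by norm_num)))) (supM (eeP (by norm_num)))) (supM (eeP (by norm_num)))) (supM (eeP (by norm_num)))) (supM (eeP (by norm_num)))) (supM (eeP (by norm_num)))) (supM (eeP (by norm_num)))) (supM (eeP (by norm_num)))) (supM (eeP (by norm_num)))) (supM (eeP (by norm_num)))) (supM (eeP (by norm_num)))) (supM (eeP (by norm_num)))) (supM (eeP (by norm_num)))) (supM (eeP (by norm_num)))) (supM (eeP (by norm_num)))) (supM (eeP (by norm_num)))) (supM (eeP (by norm_num)))) (supM (eeP (by norm_num)))) (supM (eeP (by norm_num)))) (supM (eeP (by norm_num)))) (supM (eeP (by norm_num)))) (supM (eeP (by norm_num))))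

private lemma ex4 : ∃ m ∈ Jm.support, m 2 + m 3 = 4 := by
  refine ⟨ee 0 1 4 0, ?_, by rw [ee2, ee3]⟩
  rw [mem_support_iff]
  simp only [Jm, coeff_add, coeff_monomial, ee_eq_iff]
  norm_num

private lemma pd01 : pderiv 0 (X 1 : MvPolynomial (Fin 4) ℂ) = 0 := pderiv_X_of_ne (by decide)
private lemma pd02 : pderiv 0 (X 2 : MvPolynomial (Fin 4) ℂ) = 0 := pderiv_X_of_ne (by decide)
private lemma pd03 : pderiv 0 (X 3 : MvPolynomial (Fin 4) ℂ) = 0 := pderiv_X_of_ne (by decide)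
private lemma pd10 : pderiv 1 (X 0 : MvPolynomial (Fin 4) ℂ) = 0 := pderiv_X_of_ne (by decide)
private lemma pd12 : pderiv 1 (X 2 : MvPolynomial (Fin 4) ℂ) = 0 := pderiv_X_of_ne (by decide)
private lemma pd13 : pderiv 1 (X 3 : MvPolynomial (Fin 4) ℂ) = 0 := pderiv_X_of_ne (by decide)
private lemma pd20 : pderiv 2 (X 0 : MvPolynomial (Fin 4) ℂ) = 0 := pderiv_X_of_ne (by decide)
private lemma pd21 : pderiv 2 (X 1 : MvPolynomial (Fin 4) ℂ) = 0 := pderiv_X_of_ne (by decide)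
private lemma pd23 : pderiv 2 (X 3 : MvPolynomial (Fin 4) ℂ) = 0 := pderiv_X_of_ne (by decide)
private lemma pd30 : pderiv 3 (X 0 : MvPolynomial (Fin 4) ℂ) = 0 := pderiv_X_of_ne (by decide)
private lemma pd31 : pderiv 3 (X 1 : MvPolynomial (Fin 4) ℂ) = 0 := pderiv_X_of_ne (by decide)
private lemma pd32 : pderiv 3 (X 2 : MvPolynomial (Fin 4) ℂ) = 0 := pderiv_X_of_ne (by decide)

set_option maxHeartbeats 4000000 in
private lemma key1 :
    pderiv 0 (C (1 / 2 : ℂ) * ((X 2 : MvPolynomial (Fin 4) ℂ) ^ 2 + X 3 ^ 2) + (X 1 - C Complex.I * X 0) ^ 2 * (X 1 + C Complex.I * X 0) ^ 5) * pderiv 2 Jm -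
      pderiv 2 (C (1 / 2 : ℂ) * ((X 2 : MvPolynomial (Fin 4) ℂ) ^ 2 + X 3 ^ 2) + (X 1 - C Complex.I * X 0) ^ 2 * (X 1 + C Complex.I * X 0) ^ 5) * pderiv 0 Jm +
      pderiv 1 (C (1 / 2 : ℂ) * ((X 2 : MvPolynomial (Fin 4) ℂ) ^ 2 + X 3 ^ 2) + (X 1 - C Complex.I * X 0) ^ 2 * (X 1 + C Complex.I * X 0) ^ 5) * pderiv 3 Jm -
      pderiv 3 (C (1 / 2 : ℂ) * ((X 2 : MvPolynomial (Fin 4) ℂ) ^ 2 + X 3 ^ 2) + (X 1 - C Complex.I * X 0) ^ 2 * (X 1 + C Complex.I * X 0) ^ 5) * pderiv 1 Jm = 0 := by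
  simp only [Jm, mh]
  simp only [map_add, map_sub, pderiv_mul, pderiv_pow, pderiv_C, pderiv_X_self,
    pd01, pd02, pd03, pd10, pd12, pd13, pd20, pd21, pd23, pd30, pd31, pd32, pderiv_one, map_mul, zero_mul, mul_zero, add_zero, zero_add,
    mul_one, one_mul, sub_zero, zero_sub, map_pow]
  apply MvPolynomial.funext
  intro x
  simp only [map_add, map_sub, map_mul, map_pow, map_neg, eval_C, eval_X, map_zero, map_one,
    map_ofNat, map_natCast]
  linear_combination ((24 : ℂ) * x 1 ^ 7 * x 3 ^ 3 + (-216 : ℂ) * x 1 ^ 7 * x 2 ^ 2 * x 3 + (18 : ℂ) * x 1 ^ 14 * x 3 + (16 : ℂ) * x 0 * x 1 ^ 6 * x 3 ^ 3 * Complex.I + (480 : ℂ) * x 0 * x 1 ^ 6 * x 2 * x 3 ^ 2 + (-144 : ℂ) * x 0 * x 1 ^ 6 * x 2 ^ 2 * x 3 * Complex.I + (-368 : ℂ) * x 0 * x 1 ^ 6 * x 2 ^ 3 + (12 : ℂ) * x 0 * x 1 ^ 13 * x 3 * Complex.I + (-376 : ℂ) * x 0 * x 1 ^ 13 * x 2 +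 (-408 : ℂ) * x 0 ^ 2 * x 1 ^ 5 * x 3 ^ 3 + (-120 : ℂ) * x 0 ^ 2 * x 1 ^ 5 * x 3 ^ 3 * Complex.I ^ 2 + (936 : ℂ) * x 0 ^ 2 * x 1 ^ 5 * x 2 * x 3 ^ 2 * Complex.I + (-504 : ℂ) * x 0 ^ 2 * x 1 ^ 5 * x 2 ^ 2 * x 3 + (1080 : ℂ) * x 0 ^ 2 * x 1 ^ 5 * x 2 ^ 2 * x 3 * Complex.I ^ 2 + (-600 : ℂ) * x 0 ^ 2 * x 1 ^ 5 * x 2 ^ 3 * Complex.I + (-764 : ℂ) * x 0 ^ 2 * x 1 ^ 12 * x 3 + (-90 : ℂ) * x 0 ^ 2 * x 1 ^ 12 * x 3 * Complex.I ^ 2 + (132 : ℂ) * x 0 ^ 2 * x 1 ^ 12 * x 2 * Complex.I + (-360 : ℂ) * x 0 ^ 3 * x 1 ^ 4 * x 3 ^ 3 * Complex.I + (-160 : ℂ) * x 0 ^ 3 * x 1 ^ 4 * x 3 ^ 3 * Complex.I ^ 3 + (600 : ℂ) * x 0 ^ 3 * x 1 ^ 4 * x 2 * x 3 ^ 2 +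 (-240 : ℂ) * x 0 ^ 3 * x 1 ^ 4 * x 2 * x 3 ^ 2 * Complex.I ^ 2 + (120 : ℂ) * x 0 ^ 3 * x 1 ^ 4 * x 2 ^ 2 * x 3 * Complex.I + (1440 : ℂ) * x 0 ^ 3 * x 1 ^ 4 * x 2 ^ 2 * x 3 * Complex.I ^ 3 + (120 : ℂ) * x 0 ^ 3 * x 1 ^ 4 * x 2 ^ 3 + (-160 : ℂ) * x 0 ^ 3 * x 1 ^ 4 * x 2 ^ 3 * Complex.I ^ 2 + (288 : ℂ) * x 0 ^ 3 * x 1 ^ 11 * x 3 * Complex.I + (-120 : ℂ) * x 0 ^ 3 * x 1 ^ 11 * x 3 * Complex.I ^ 3 + (-672 : ℂ) * x 0 ^ 3 * x 1 ^ 11 * x 2 + (2560 : ℂ) * x 0 ^ 3 * x 1 ^ 11 * x 2 * Complex.I ^ 2 + (-120 : ℂ) * x 0 ^ 4 * x 1 ^ 3 * x 3 ^ 3 + (120 : ℂ) * x 0 ^ 4 * x 1 ^ 3 * x 3 ^ 3 * Complex.I ^ 2 + (40 : ℂ) * x 0 ^ 4 * x 1 ^ 3 * x 3 ^ 3 * Complex.I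 ^ 4 + (120 : ℂ) * x 0 ^ 4 * x 1 ^ 3 * x 2 * x 3 ^ 2 * Complex.I + (-1560 : ℂ) * x 0 ^ 4 * x 1 ^ 3 * x 2 * x 3 ^ 2 * Complex.I ^ 3 + (-600 : ℂ) * x 0 ^ 4 * x 1 ^ 3 * x 2 ^ 2 * x 3 + (600 : ℂ) * x 0 ^ 4 * x 1 ^ 3 * x 2 ^ 2 * x 3 * Complex.I ^ 2 + (-360 : ℂ) * x 0 ^ 4 * x 1 ^ 3 * x 2 ^ 2 * x 3 * Complex.I ^ 4 + (-360 : ℂ) * x 0 ^ 4 * x 1 ^ 3 * x 2 ^ 3 * Complex.I + (520 : ℂ) * x 0 ^ 4 * x 1 ^ 3 * x 2 ^ 3 * Complex.I ^ 3 + (1344 : ℂ) * x 0 ^ 4 * x 1 ^ 10 * x 3 + (980 : ℂ) * x 0 ^ 4 * x 1 ^ 10 * x 3 * Complex.I ^ 2 + (30 : ℂ) * x 0 ^ 4 * x 1 ^ 10 * x 3 * Complex.I ^ 4 + (-6292 : ℂ) * x 0 ^ 4 * x 1 ^ 10 * x 2 * Complex.I + (2660 : ℂ) * x 0 ^ 4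 * x 1 ^ 10 * x 2 * Complex.I ^ 3 + (-456 : ℂ) * x 0 ^ 5 * x 1 ^ 2 * x 3 ^ 3 * Complex.I + (456 : ℂ) * x 0 ^ 5 * x 1 ^ 2 * x 3 ^ 3 * Complex.I ^ 3 + (144 : ℂ) * x 0 ^ 5 * x 1 ^ 2 * x 3 ^ 3 * Complex.I ^ 5 + (504 : ℂ) * x 0 ^ 5 * x 1 ^ 2 * x 2 * x 3 ^ 2 + (-504 : ℂ) * x 0 ^ 5 * x 1 ^ 2 * x 2 * x 3 ^ 2 * Complex.I ^ 2 + (-576 : ℂ) * x 0 ^ 5 * x 1 ^ 2 * x 2 * x 3 ^ 2 * Complex.I ^ 4 + (-360 : ℂ) * x 0 ^ 5 * x 1 ^ 2 * x 2 ^ 2 * x 3 * Complex.I + (360 : ℂ) * x 0 ^ 5 * x 1 ^ 2 * x 2 ^ 2 * x 3 * Complex.I ^ 3 + (-1296 : ℂ) * x 0 ^ 5 * x 1 ^ 2 * x 2 ^ 2 * x 3 * Complex.I ^ 5 + (408 : ℂ) * x 0 ^ 5 * x 1 ^ 2 * x 2 ^ 3 + (-408 : ℂ) * x 0 ^ 5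 * x 1 ^ 2 * x 2 ^ 3 * Complex.I ^ 2 + (528 : ℂ) * x 0 ^ 5 * x 1 ^ 2 * x 2 ^ 3 * Complex.I ^ 4 + (-320 : ℂ) * x 0 ^ 5 * x 1 ^ 9 * x 3 * Complex.I + (40 : ℂ) * x 0 ^ 5 * x 1 ^ 9 * x 3 * Complex.I ^ 3 + (108 : ℂ) * x 0 ^ 5 * x 1 ^ 9 * x 3 * Complex.I ^ 5 + (5496 : ℂ) * x 0 ^ 5 * x 1 ^ 9 * x 2 + (-9864 : ℂ) * x 0 ^ 5 * x 1 ^ 9 * x 2 * Complex.I ^ 2 + (-1176 : ℂ) * x 0 ^ 5 * x 1 ^ 9 * x 2 * Complex.I ^ 4 + (312 : ℂ) * x 0 ^ 6 * x 1 * x 3 ^ 3 + (-312 : ℂ) * x 0 ^ 6 * x 1 * x 3 ^ 3 * Complex.I ^ 2 + (312 : ℂ) * x 0 ^ 6 * x 1 * x 3 ^ 3 * Complex.I ^ 4 + (56 : ℂ) * x 0 ^ 6 * x 1 * x 3 ^ 3 * Complex.I ^ 6 + (456 : ℂ) * x 0 ^ 6 * x 1 * x 2 * x 3 ^ 2 *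 Complex.I + (-456 : ℂ) * x 0 ^ 6 * x 1 * x 2 * x 3 ^ 2 * Complex.I ^ 3 + (600 : ℂ) * x 0 ^ 6 * x 1 * x 2 * x 3 ^ 2 * Complex.I ^ 5 + (24 : ℂ) * x 0 ^ 6 * x 1 * x 2 ^ 2 * x 3 + (-24 : ℂ) * x 0 ^ 6 * x 1 * x 2 ^ 2 * x 3 * Complex.I ^ 2 + (24 : ℂ) * x 0 ^ 6 * x 1 * x 2 ^ 2 * x 3 * Complex.I ^ 4 + (-504 : ℂ) * x 0 ^ 6 * x 1 * x 2 ^ 2 * x 3 * Complex.I ^ 6 + (168 : ℂ) * x 0 ^ 6 * x 1 * x 2 ^ 3 * Complex.I + (-168 : ℂ) * x 0 ^ 6 * x 1 * x 2 ^ 3 * Complex.I ^ 3 + (152 : ℂ) * x 0 ^ 6 * x 1 * x 2 ^ 3 * Complex.I ^ 5 + (4548 : ℂ) * x 0 ^ 6 * x 1 ^ 8 * x 3 + (1584 : ℂ) * x 0 ^ 6 * x 1 ^ 8 * x 3 * Complex.I ^ 2 + (-324 : ℂ) * x 0 ^ 6 * x 1 ^ 8 * x 3 * Complex.I ^ 4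 + (42 : ℂ) * x 0 ^ 6 * x 1 ^ 8 * x 3 * Complex.I ^ 6 + (5124 : ℂ) * x 0 ^ 6 * x 1 ^ 8 * x 2 * Complex.I + (-2156 : ℂ) * x 0 ^ 6 * x 1 ^ 8 * x 2 * Complex.I ^ 3 + (-2756 : ℂ) * x 0 ^ 6 * x 1 ^ 8 * x 2 * Complex.I ^ 5 + (72 : ℂ) * x 0 ^ 7 * x 3 ^ 3 * Complex.I + (-72 : ℂ) * x 0 ^ 7 * x 3 ^ 3 * Complex.I ^ 3 + (72 : ℂ) * x 0 ^ 7 * x 3 ^ 3 * Complex.I ^ 5 + (-120 : ℂ) * x 0 ^ 7 * x 2 * x 3 ^ 2 + (120 : ℂ) * x 0 ^ 7 * x 2 * x 3 ^ 2 * Complex.I ^ 2 + (-120 : ℂ) * x 0 ^ 7 * x 2 * x 3 ^ 2 * Complex.I ^ 4 + (336 : ℂ) * x 0 ^ 7 * x 2 * x 3 ^ 2 * Complex.I ^ 6 + (-24 : ℂ) * x 0 ^ 7 * x 2 ^ 2 * x 3 * Complex.I + (24 : ℂ) * x 0 ^ 7 * x 2 ^ 2 * x 3 * Complex.I ^ 3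 + (-24 : ℂ) * x 0 ^ 7 * x 2 ^ 2 * x 3 * Complex.I ^ 5 + (-24 : ℂ) * x 0 ^ 7 * x 2 ^ 3 + (24 : ℂ) * x 0 ^ 7 * x 2 ^ 3 * Complex.I ^ 2 + (-24 : ℂ) * x 0 ^ 7 * x 2 ^ 3 * Complex.I ^ 4 + (-3408 : ℂ) * x 0 ^ 7 * x 1 ^ 7 * x 3 * Complex.I + (1616 : ℂ) * x 0 ^ 7 * x 1 ^ 7 * x 3 * Complex.I ^ 3 + (176 : ℂ) * x 0 ^ 7 * x 1 ^ 7 * x 3 * Complex.I ^ 5 + (3280 : ℂ) * x 0 ^ 7 * x 1 ^ 7 * x 2 + (-2544 : ℂ) * x 0 ^ 7 * x 1 ^ 7 * x 2 * Complex.I ^ 2 + (8144 : ℂ) * x 0 ^ 7 * x 1 ^ 7 * x 2 * Complex.I ^ 4 + (-1008 : ℂ) * x 0 ^ 7 * x 1 ^ 7 * x 2 * Complex.I ^ 6 + (2954 : ℂ) * x 0 ^ 8 * x 1 ^ 6 * x 3 + (-7056 : ℂ) * x 0 ^ 8 * x 1 ^ 6 * x 3 * Complex.I ^ 2 + (-3164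 : ℂ) * x 0 ^ 8 * x 1 ^ 6 * x 3 * Complex.I ^ 4 + (168 : ℂ) * x 0 ^ 8 * x 1 ^ 6 * x 3 * Complex.I ^ 6 + (7080 : ℂ) * x 0 ^ 8 * x 1 ^ 6 * x 2 * Complex.I + (-7896 : ℂ) * x 0 ^ 8 * x 1 ^ 6 * x 2 * Complex.I ^ 3 + (7728 : ℂ) * x 0 ^ 8 * x 1 ^ 6 * x 2 * Complex.I ^ 5 + (4956 : ℂ) * x 0 ^ 9 * x 1 ^ 5 * x 3 * Complex.I + (336 : ℂ) * x 0 ^ 9 * x 1 ^ 5 * x 3 * Complex.I ^ 3 + (-4536 : ℂ) * x 0 ^ 9 * x 1 ^ 5 * x 3 * Complex.I ^ 5 + (-3960 : ℂ) * x 0 ^ 9 * x 1 ^ 5 * x 2 + (4160 : ℂ) * x 0 ^ 9 * x 1 ^ 5 * x 2 * Complex.I ^ 2 + (-3360 : ℂ) * x 0 ^ 9 * x 1 ^ 5 * x 2 * Complex.I ^ 4 + (2128 : ℂ) * x 0 ^ 9 * x 1 ^ 5 * x 2 * Complex.I ^ 6 + (-1980 : ℂ) * x 0 ^ 10 * x 1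 ^ 4 * x 3 + (2110 : ℂ) * x 0 ^ 10 * x 1 ^ 4 * x 3 * Complex.I ^ 2 + (5040 : ℂ) * x 0 ^ 10 * x 1 ^ 4 * x 3 * Complex.I ^ 4 + (-1540 : ℂ) * x 0 ^ 10 * x 1 ^ 4 * x 3 * Complex.I ^ 6 + (924 : ℂ) * x 0 ^ 10 * x 1 ^ 4 * x 2 * Complex.I + (-1304 : ℂ) * x 0 ^ 10 * x 1 ^ 4 * x 2 * Complex.I ^ 3 + (1512 : ℂ) * x 0 ^ 10 * x 1 ^ 4 * x 2 * Complex.I ^ 5 + (336 : ℂ) * x 0 ^ 11 * x 1 ^ 3 * x 3 * Complex.I + (-856 : ℂ) * x 0 ^ 11 * x 1 ^ 3 * x 3 * Complex.I ^ 3 + (2352 : ℂ) * x 0 ^ 11 * x 1 ^ 3 * x 3 * Complex.I ^ 5 + (-2736 : ℂ) * x 0 ^ 11 * x 1 ^ 3 * x 2 + (2736 : ℂ) * x 0 ^ 11 * x 1 ^ 3 * x 2 * Complex.I ^ 2 + (-3216 : ℂ) * x 0 ^ 11 * x 1 ^ 3 * x 2 * Complex.I ^ 4 + (1008 : ℂ)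 * x 0 ^ 11 * x 1 ^ 3 * x 2 * Complex.I ^ 6 + (-684 : ℂ) * x 0 ^ 12 * x 1 ^ 2 * x 3 + (684 : ℂ) * x 0 ^ 12 * x 1 ^ 2 * x 3 * Complex.I ^ 2 + (-1074 : ℂ) * x 0 ^ 12 * x 1 ^ 2 * x 3 * Complex.I ^ 4 + (168 : ℂ) * x 0 ^ 12 * x 1 ^ 2 * x 3 * Complex.I ^ 6 + (-1716 : ℂ) * x 0 ^ 12 * x 1 ^ 2 * x 2 * Complex.I + (1716 : ℂ) * x 0 ^ 12 * x 1 ^ 2 * x 2 * Complex.I ^ 3 + (-1744 : ℂ) * x 0 ^ 12 * x 1 ^ 2 * x 2 * Complex.I ^ 5 + (-264 : ℂ) * x 0 ^ 13 * x 1 * x 3 * Complex.I + (264 : ℂ) * x 0 ^ 13 * x 1 * x 3 * Complex.I ^ 3 + (-212 : ℂ) * x 0 ^ 13 * x 1 * x 3 * Complex.I ^ 5 + (504 : ℂ) * x 0 ^ 13 * x 1 * x 2 + (-504 : ℂ) * x 0 ^ 13 * x 1 * x 2 * Complex.I ^ 2 + (504 : ℂ) * x 0 ^ 13 * x 1 *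 x 2 * Complex.I ^ 4 + (-336 : ℂ) * x 0 ^ 13 * x 1 * x 2 * Complex.I ^ 6 + (36 : ℂ) * x 0 ^ 14 * x 3 + (-36 : ℂ) * x 0 ^ 14 * x 3 * Complex.I ^ 2 + (36 : ℂ) * x 0 ^ 14 * x 3 * Complex.I ^ 4 + (42 : ℂ) * x 0 ^ 14 * x 3 * Complex.I ^ 6 + (60 : ℂ) * x 0 ^ 14 * x 2 * Complex.I + (-60 : ℂ) * x 0 ^ 14 * x 2 * Complex.I ^ 3 + (60 : ℂ) * x 0 ^ 14 * x 2 * Complex.I ^ 5) * Complex.I_sq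

private def sb : Fin 4 → MvPolynomial (Fin 2) ℂ
  | 0 => C (Complex.I / 8) * X 1
  | 1 => C (1 / 8 : ℂ) * X 1
  | 2 => C Complex.I * X 0 - C (Complex.I / 2)
  | 3 => X 0 + C (1 / 2 : ℂ)

set_option maxHeartbeats 1000000 in
private lemma keyH :
    aeval sb (C (1 / 2 : ℂ) * ((X 2 : MvPolynomial (Fin 4) ℂ) ^ 2 + X 3 ^ 2) + (X 1 - C Complex.I * X 0) ^ 2 * (X 1 + C Complex.I * X 0) ^ 5) = (X 0 : MvPolynomial (Fin 2) ℂ) := by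
  apply MvPolynomial.funext
  intro y
  simp only [sb, map_add, map_sub, map_mul, map_pow, aeval_X, aeval_C, algebraMap_eq,
    Matrix.cons_val_zero, Matrix.cons_val_one, Matrix.head_cons, Matrix.cons_val_two,
    Matrix.tail_cons, Matrix.cons_val_three, eval_C, eval_X, eval_add, eval_sub, eval_mul,
    eval_pow]
  linear_combination ((1/8 : ℂ) + (1/2097152 : ℂ) * y 1 ^ 7 + (1/1048576 : ℂ) * y 1 ^ 7 * Complex.I ^ 2 + (-1/2097152 : ℂ) * y 1 ^ 7 * Complex.I ^ 4 + (-1/524288 : ℂ) * y 1 ^ 7 * Complex.I ^ 6 + (-1/2097152 : ℂ) * y 1 ^ 7 * Complex.I ^ 8 + (1/1048576 : ℂ) * y 1 ^ 7 * Complex.I ^ 10 + (1/2097152 : ℂ) * y 1 ^ 7 * Complex.I ^ 12 + (-1/2 : ℂ) * y 0 + (1/2 : ℂ) * y 0 ^ 2) * Complex.I_sq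

set_option maxHeartbeats 4000000 in
private lemma keyJ : aeval sb Jm = (X 1 : MvPolynomial (Fin 2) ℂ) := by
  simp only [Jm, mh]
  apply MvPolynomial.funext
  intro y
  simp only [sb, map_add, map_sub, map_mul, map_pow, aeval_X, aeval_C, algebraMap_eq,
    Matrix.cons_val_zero, Matrix.cons_val_one, Matrix.head_cons, Matrix.cons_val_two,
    Matrix.tail_cons, Matrix.cons_val_three, eval_C, eval_X, eval_add, eval_sub, eval_mul,
    eval_pow]
  linear_combination ((-1 : ℂ) * y 1 + (1/2 : ℂ) * y 1 * Complex.I ^ 2 + (-3/67108864 : ℂ) * y 1 ^ 8 + (11/16777216 : ℂ) * y 1 ^ 8 * Complex.I ^ 2 + (131/33554432 : ℂ) * y 1 ^ 8 * Complex.I ^ 4 + (-17/16777216 : ℂ) * y 1 ^ 8 * Complex.I ^ 6 + (-27/67108864 : ℂ) * y 1 ^ 8 * Complex.I ^ 8 + (-1/8796093022208 : ℂ) * y 1 ^ 15 + (25/8796093022208 : ℂ) * y 1 ^ 15 * Complex.I ^ 2 + (11/8796093022208 : ℂ) * y 1 ^ 15 * Complex.I ^ 4 + (-99/8796093022208 :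 ℂ) * y 1 ^ 15 * Complex.I ^ 6 + (-99/8796093022208 : ℂ) * y 1 ^ 15 * Complex.I ^ 8 + (11/8796093022208 : ℂ) * y 1 ^ 15 * Complex.I ^ 10 + (25/8796093022208 : ℂ) * y 1 ^ 15 * Complex.I ^ 12 + (-1/8796093022208 : ℂ) * y 1 ^ 15 * Complex.I ^ 14 + (-3/2 : ℂ) * y 0 * y 1 * Complex.I ^ 2 + (-3/16777216 : ℂ) * y 0 * y 1 ^ 8 + (15/4194304 : ℂ) * y 0 * y 1 ^ 8 * Complex.I ^ 2 + (-21/8388608 : ℂ) * y 0 * y 1 ^ 8 * Complex.I ^ 4 + (-21/4194304 : ℂ) * y 0 * y 1 ^ 8 * Complex.I ^ 6 + (21/16777216 : ℂ) * y 0 * y 1 ^ 8 * Complex.I ^ 8 + (-3/16777216 : ℂ) * y 0 ^ 2 * y 1 ^ 8 + (3/2097152 : ℂ) * y 0 ^ 2 * y 1 ^ 8 * Complex.I ^ 2 + (21/8388608 : ℂ) * y 0 ^ 2 * y 1 ^ 8 * Complex.I ^ 4 + (-15/16777216 : ℂ) * y 0 ^ 2 * y 1 ^ 8 * Complex.I ^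 8 + (2 : ℂ) * y 0 ^ 3 * y 1 * Complex.I ^ 2) * Complex.I_sq

private lemma indep :
    AlgebraicIndependent ℂ ![(C (1 / 2 : ℂ) * ((X 2 : MvPolynomial (Fin 4) ℂ) ^ 2 + X 3 ^ 2) + (X 1 - C Complex.I * X 0) ^ 2 * (X 1 + C Complex.I * X 0) ^ 5 : MvPolynomial (Fin 4) ℂ), Jm] := by
  apply AlgebraicIndependent.of_comp (aeval sb)
  have h : (aeval sb) ∘ ![(C (1 / 2 : ℂ) * ((X 2 : MvPolynomial (Fin 4) ℂ) ^ 2 + X 3 ^ 2) + (X 1 - C Complex.I * X 0) ^ 2 * (X 1 + C Complex.I * X 0) ^ 5 : MvPolynomial (Fin 4) ℂ), Jm] =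
      (X : Fin 2 → MvPolynomial (Fin 2) ℂ) := by
    funext i
    fin_cases i
    · simpa using keyH
    · simpa using keyJ
  rw [h]
  exact MvPolynomial.algebraicIndependent_X _ _

end StmtAux

/-- The natural Hamiltonian `H = (1/2)(p₁² + p₂²) + (q₂ − i q₁)²(q₂ + i q₁)⁵` on `ℂ⁴`
admits an additional polynomial first integral `I` of degree four in the momenta:
`{H, I} = 0`, every monomial of `I` has degree at most `4` in `(p₁,p₂)` and some monomial
has degree exactly `4` in `(p₁,p₂)`, and `H`, `I` are algebraically independent over `ℂ`
(variables: `q₁ = X 0`, `q₂ = X 1`, `p₁ = X 2`, `p₂ = X 3`). -/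
theorem stmt18 :
    let q1 : MvPolynomial (Fin 4) ℂ := X 0
    let q2 : MvPolynomial (Fin 4) ℂ := X 1
    let p1 : MvPolynomial (Fin 4) ℂ := X 2
    let p2 : MvPolynomial (Fin 4) ℂ := X 3
    let V : MvPolynomial (Fin 4) ℂ :=
      (q2 - C Complex.I * q1) ^ 2 * (q2 + C Complex.I * q1) ^ 5
    let H : MvPolynomial (Fin 4) ℂ := C (1 / 2 : ℂ) * (p1 ^ 2 + p2 ^ 2) + V
    let pb : MvPolynomial (Fin 4) ℂ → MvPolynomial (Fin 4) ℂ → MvPolynomial (Fin 4) ℂ :=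
      fun A B =>
        pderiv 0 A * pderiv 2 B - pderiv 2 A * pderiv 0 B +
          pderiv 1 A * pderiv 3 B - pderiv 3 A * pderiv 1 B
    ∃ I : MvPolynomial (Fin 4) ℂ,
      pb H I = 0 ∧
      (∀ mo ∈ I.support, mo 2 + mo 3 ≤ 4) ∧
      (∃ mo ∈ I.support, mo 2 + mo 3 = 4) ∧
      AlgebraicIndependent ℂ ![H, I] := by
  intro q1 q2 p1 p2 V H pb
  exact ⟨Jm, key1, sup4, ex4, indep⟩
end
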